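/- For a complex matrix M and an irreducible nonnegative matrix B of the same size with |M| ≤ B entrywise and strict inequality in at least one entry, spr(M) < spr(B). -/

import Mathlib

/-!
Let `μ` be an eigenvalue of `M` with `‖μ‖ = spr M`, with eigenvector `v`, and put `x = |v|`.
The triangle inequality gives `‖μ‖ • x ≤ |M| *ᵥ x ≤ B *ᵥ x`. Equality `B *ᵥ x = ‖μ‖ • x` is
impossible: a nonnegative eigenvector of an irreducible matrix is positive, and then the strict
entry of `|M| < B` makes `|M| *ᵥ x < B *ᵥ x` in that row. So `z = B *ᵥ x - ‖μ‖ • x` is nonnegative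
and nonzero, and a positive matrix `P` commuting with `B` (a sum of powers of `B`) turns `x` and
`z` into positive vectors `y`, `w` with `B *ᵥ y = ‖μ‖ • y + w ≥ (‖μ‖ + ε) • y`. Finally, a positive
`y` with `s • y ≤ B *ᵥ y` forces `s ≤ spr B` (Collatz–Wielandt): `‖B ^ k‖` then grows at least
like `s ^ k`, and Gelfand's formula turns this growth rate into a lower bound for the spectral
radius.
-/

open Matrix

/-- The spectral radius of a complex square matrix: the maximum modulus of its
eigenvalues (elements of its spectrum). -/
noncomputable def spr {n : Type*} [Fintype n] [DecidableEq n] (A : Matrix n n ℂ) : ℝ :=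
  sSup ((fun z : ℂ => ‖z‖) '' spectrum ℂ A)

open Filter Topology

theorem spectrum.ofReal_le_spectralRadius_of_mul_pow_le_norm_pow {A : Type*} [NormedRing A]
    [NormedAlgebra ℂ A] [CompleteSpace A] (a : A) {C s : ℝ} (hC : 0 < C) (hs : 0 ≤ s)
    (h : ∀ k : ℕ, C * s ^ k ≤ ‖a ^ k‖) :
    ENNReal.ofReal s ≤ spectralRadius ℂ a := by
  have hroot : Tendsto (fun k : ℕ => C ^ (1 / k : ℝ) * s) atTop (𝓝 s) := by
    simpa using ((Real.continuousAt_const_rpow hC.ne').tendsto.comp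
      tendsto_one_div_atTop_nhds_zero_nat).mul_const s
  refine le_of_tendsto_of_tendsto (ENNReal.tendsto_ofReal hroot)
    (spectrum.pow_norm_pow_one_div_tendsto_nhds_spectralRadius a)
    (eventually_atTop.2 ⟨1, fun k hk => ENNReal.ofReal_le_ofReal ?_⟩)
  have hk : k ≠ 0 := Nat.one_le_iff_ne_zero.mp hk
  calc C ^ (1 / k : ℝ) * s = (C * s ^ k) ^ (1 / k : ℝ) := by
        rw [Real.mul_rpow hC.le (pow_nonneg hs k), one_div, Real.pow_rpow_inv_natCast hs hk]
    _ ≤ ‖a ^ k‖ ^ (1 / k : ℝ) := by gcongr; exact h k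

theorem exists_pos_smul_le_of_forall_pos {n K : Type*} [Fintype n] [Nonempty n] [Field K]
    [LinearOrder K] [IsStrictOrderedRing K] {y w : n → K} (hy : ∀ i, 0 < y i) (hw : ∀ i, 0 < w i) :
    ∃ ε : K, 0 < ε ∧ ε • y ≤ w := by
  obtain ⟨i₀, -, hmin⟩ := Finset.exists_min_image Finset.univ (fun i => w i / y i)
    Finset.univ_nonempty
  refine ⟨w i₀ / y i₀, div_pos (hw i₀) (hy i₀), fun i => ?_⟩
  exact (le_div_iff₀ (hy i)).mp (hmin i (Finset.mem_univ i))

namespace Matrix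

variable {n : Type*} [Fintype n]

theorem exists_mulVec_eq_smul_of_mem_spectrum [DecidableEq n] {K : Type*} [Field K]
    {A : Matrix n n K} {μ : K} (hμ : μ ∈ spectrum K A) : ∃ v ≠ 0, A *ᵥ v = μ • v := by
  rw [← spectrum_toLin', ← Module.End.hasEigenvalue_iff_mem_spectrum] at hμ
  obtain ⟨v, hv⟩ := hμ.exists_hasEigenvector
  exact ⟨v, hv.2, by rw [← toLin'_apply, hv.apply_eq_smul]⟩

theorem norm_smul_le_map_norm_mulVec {K : Type*} [NormedField K] {A : Matrix n n K} {μ : K}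
    {v : n → K} (h : A *ᵥ v = μ • v) :
    ‖μ‖ • (fun i => ‖v i‖) ≤ A.map (fun a => ‖a‖) *ᵥ fun i => ‖v i‖ := by
  intro i
  calc ‖μ‖ * ‖v i‖ = ‖∑ j, A i j * v j‖ := by
        rw [← norm_mul, ← smul_eq_mul, ← Pi.smul_apply, ← h]; rfl
    _ ≤ ∑ j, ‖A i j * v j‖ := norm_sum_le _ _
    _ = _ := by simp only [norm_mul]; rfl

section OrderedSemiring

variable {m R : Type*} [CommSemiring R] [PartialOrder R] [IsOrderedRing R]

theorem mulVec_mono_of_nonneg {A : Matrix m n R} (hA : ∀ i j, 0 ≤ A i j) {x y : n → R}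
    (h : x ≤ y) : A *ᵥ x ≤ A *ᵥ y := fun i =>
  Finset.sum_le_sum fun j _ => mul_le_mul_of_nonneg_left (h j) (hA i j)

theorem mulVec_le_mulVec_of_le {A B : Matrix m n R} (h : ∀ i j, A i j ≤ B i j) {x : n → R}
    (hx : 0 ≤ x) : A *ᵥ x ≤ B *ᵥ x := fun i =>
  Finset.sum_le_sum fun j _ => mul_le_mul_of_nonneg_right (h i j) (hx j)

theorem pow_smul_le_pow_mulVec [DecidableEq n] {B : Matrix n n R} (hB : ∀ i j, 0 ≤ B i j)
    {s : R} (hs : 0 ≤ s) {y : n → R} (h : s • y ≤ B *ᵥ y) (k : ℕ) :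
    s ^ k • y ≤ B ^ k *ᵥ y := by
  induction k with
  | zero => simp
  | succ k ih =>
    calc s ^ (k + 1) • y = s • s ^ k • y := by rw [pow_succ', mul_smul]
      _ ≤ s • (B ^ k *ᵥ y) := smul_le_smul_of_nonneg_left ih hs
      _ = B ^ k *ᵥ (s • y) := (mulVec_smul _ _ _).symm
      _ ≤ B ^ k *ᵥ (B *ᵥ y) := mulVec_mono_of_nonneg (pow_apply_nonneg hB k) h
      _ = B ^ (k + 1) *ᵥ y := by rw [mulVec_mulVec, pow_succ]

end OrderedSemiring

section StrictOrderedSemiring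

variable {m R : Type*} [Semiring R] [PartialOrder R] [IsStrictOrderedRing R]

theorem mulVec_apply_lt_of_lt {A B : Matrix m n R} (h : ∀ i j, A i j ≤ B i j) {i : m} {j : n}
    (hij : A i j < B i j) {x : n → R} (hx : ∀ j, 0 < x j) : (A *ᵥ x) i < (B *ᵥ x) i :=
  Finset.sum_lt_sum (fun k _ => mul_le_mul_of_nonneg_right (h i k) (hx k).le)
    ⟨j, Finset.mem_univ j, mul_lt_mul_of_pos_right hij (hx j)⟩

theorem mulVec_apply_pos {P : Matrix m n R} (hP : ∀ i j, 0 < P i j) {x : n → R} (hx : 0 ≤ x)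
    (hx0 : x ≠ 0) (i : m) : 0 < (P *ᵥ x) i := by
  obtain ⟨j, hj⟩ := Function.ne_iff.mp hx0
  exact Finset.sum_pos' (fun k _ => mul_nonneg (hP i k).le (hx k))
    ⟨j, Finset.mem_univ j, mul_pos (hP i j) ((hx j).lt_of_ne' hj)⟩

end StrictOrderedSemiring

variable [DecidableEq n]

theorem pow_mulVec_of_mulVec_eq_smul {R : Type*} [CommSemiring R] {B : Matrix n n R}
    {r : R} {x : n → R} (h : B *ᵥ x = r • x) (k : ℕ) : B ^ k *ᵥ x = r ^ k • x := by
  induction k with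
  | zero => simp
  | succ k ih => rw [pow_succ, ← mulVec_mulVec, h, mulVec_smul, ih, smul_smul, pow_succ']

section IsIrreducible

variable {R : Type*} [CommRing R] [LinearOrder R] [IsStrictOrderedRing R] {B : Matrix n n R}

theorem IsIrreducible.pos_of_mulVec_eq_smul (hB : B.IsIrreducible) {r : R} {x : n → R}
    (hx : 0 ≤ x) (hx0 : x ≠ 0) (h : B *ᵥ x = r • x) (i : n) : 0 < x i := by
  obtain ⟨j, hj⟩ := Function.ne_iff.mp hx0
  obtain ⟨k, -, hk⟩ := (isIrreducible_iff_exists_pow_pos hB.nonneg).mp hB i j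
  have : 0 < r ^ k * x i := by
    rw [← smul_eq_mul, ← Pi.smul_apply, ← pow_mulVec_of_mulVec_eq_smul h]
    exact Finset.sum_pos' (fun l _ => mul_nonneg (pow_apply_nonneg hB.nonneg k i l) (hx l))
      ⟨j, Finset.mem_univ j, mul_pos hk ((hx j).lt_of_ne' hj)⟩
  exact (hx i).lt_of_ne fun h0 => by simp [← h0] at this

theorem IsIrreducible.exists_commute_pos (hB : B.IsIrreducible) :
    ∃ P : Matrix n n R, Commute B P ∧ ∀ i j, 0 < P i j := by
  choose k _ hk using (isIrreducible_iff_exists_pow_pos hB.nonneg).mp hB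
  obtain ⟨N, hN⟩ := (Set.finite_range fun p : n × n => k p.1 p.2).bddAbove
  refine ⟨∑ t ∈ Finset.range (N + 1), B ^ t, Commute.sum_right _ _ _ fun t _ =>
    Commute.self_pow B t, fun i j => ?_⟩
  rw [sum_apply]
  exact Finset.sum_pos' (fun t _ => pow_apply_nonneg hB.nonneg t i j)
    ⟨k i j, Finset.mem_range.mpr (Nat.lt_succ_of_le (hN ⟨(i, j), rfl⟩)), hk i j⟩

end IsIrreducible

end Matrix

section SpectralRadius

-- `spectralRadius` does not depend on a norm; this one only serves to apply Gelfand's formula.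
attribute [local instance] Matrix.linftyOpNormedRing Matrix.linftyOpNormedAlgebra

variable {n : Type*} [Fintype n] [DecidableEq n]

theorem spr_nonneg (A : Matrix n n ℂ) : 0 ≤ spr A :=
  Real.sSup_nonneg fun _ ⟨_, _, hz⟩ => hz ▸ norm_nonneg _

theorem spectralRadius_eq_ofReal_spr (A : Matrix n n ℂ) :
    spectralRadius ℂ A = ENNReal.ofReal (spr A) := by
  rcases (spectrum ℂ A).eq_empty_or_nonempty with h | h
  · simp [spectralRadius, spr, h]
  obtain ⟨μ, hμ, hρ⟩ := spectrum.exists_nnnorm_eq_spectralRadius_of_nonempty h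
  have hmax : IsGreatest ((fun z : ℂ => ‖z‖) '' spectrum ℂ A) ‖μ‖ := by
    refine ⟨⟨μ, hμ, rfl⟩, ?_⟩
    rintro _ ⟨ν, hν, rfl⟩
    have : (‖ν‖₊ : ENNReal) ≤ ‖μ‖₊ := hρ ▸ le_iSup₂ (f := fun k _ => (‖k‖₊ : ENNReal)) ν hν
    exact_mod_cast this
  rw [spr, hmax.csSup_eq, ← hρ, ofReal_norm]
  rfl

theorem exists_mem_spectrum_norm_eq_spr [Nonempty n] (A : Matrix n n ℂ) :
    ∃ μ ∈ spectrum ℂ A, ‖μ‖ = spr A := by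
  obtain ⟨μ, hμ, hρ⟩ := spectrum.exists_nnnorm_eq_spectralRadius_of_nonempty
    (spectrum.nonempty_of_isAlgClosed_of_finiteDimensional ℂ A)
  refine ⟨μ, hμ, ?_⟩
  rw [spectralRadius_eq_ofReal_spr] at hρ
  exact (ENNReal.ofReal_eq_ofReal_iff (norm_nonneg μ) (spr_nonneg A)).mp
    ((ofReal_norm μ).trans hρ)

theorem le_spr_of_smul_le_mulVec [Nonempty n] {B : Matrix n n ℝ} (hB : ∀ i j, 0 ≤ B i j)
    {s : ℝ} {y : n → ℝ} (hy : ∀ i, 0 < y i) (h : s • y ≤ B *ᵥ y) :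
    s ≤ spr (B.map Complex.ofReal) := by
  rcases le_or_gt s 0 with hs | hs
  · exact hs.trans (spr_nonneg _)
  obtain ⟨i⟩ := ‹Nonempty n›
  have hy0 : 0 < ‖y‖ := norm_pos_iff.mpr (Function.ne_iff.mpr ⟨i, (hy i).ne'⟩)
  have hgrowth (k : ℕ) : y i / ‖y‖ * s ^ k ≤ ‖B.map Complex.ofReal ^ k‖ := by
    have hnorm : ‖B.map Complex.ofReal ^ k‖ = ‖B ^ k‖ := by
      rw [show B.map Complex.ofReal ^ k = (B ^ k).map Complex.ofReal from
        (map_pow Complex.ofRealHom.mapMatrix B k).symm]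
      simp [linfty_opNorm_def]
    rw [hnorm, div_mul_eq_mul_div, div_le_iff₀ hy0]
    calc y i * s ^ k ≤ (B ^ k *ᵥ y) i := by
          simpa [mul_comm] using pow_smul_le_pow_mulVec hB hs.le h k i
      _ ≤ ‖B ^ k *ᵥ y‖ := (Real.le_norm_self _).trans (norm_le_pi_norm _ i)
      _ ≤ ‖B ^ k‖ * ‖y‖ := linfty_opNorm_mulVec _ _
  have := spectrum.ofReal_le_spectralRadius_of_mul_pow_le_norm_pow _ (div_pos (hy i) hy0)
    hs.le hgrowth
  rwa [spectralRadius_eq_ofReal_spr, ENNReal.ofReal_le_ofReal_iff (spr_nonneg _)] at this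

theorem Matrix.IsIrreducible.lt_spr_of_smul_le_mulVec {B : Matrix n n ℝ} (hB : B.IsIrreducible)
    {r : ℝ} {x : n → ℝ} (hx : 0 ≤ x) (hle : r • x ≤ B *ᵥ x) (hne : r • x ≠ B *ᵥ x) :
    r < spr (B.map Complex.ofReal) := by
  have : Nonempty n := ⟨(Function.ne_iff.mp hne).choose⟩
  obtain ⟨P, hBP, hP⟩ := hB.exists_commute_pos
  set z := B *ᵥ x - r • x
  have hz : 0 ≤ z := sub_nonneg.mpr hle
  have hz0 : z ≠ 0 := sub_ne_zero.mpr hne.symm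
  have hx0 : x ≠ 0 := by rintro rfl; simp [z] at hz0
  have hBy : B *ᵥ (P *ᵥ x) = r • (P *ᵥ x) + P *ᵥ z := by
    rw [mulVec_mulVec, hBP.eq, ← mulVec_mulVec, mulVec_sub, mulVec_smul, add_sub_cancel]
  obtain ⟨ε, hε, hεy⟩ :=
    exists_pos_smul_le_of_forall_pos (mulVec_apply_pos hP hx hx0) (mulVec_apply_pos hP hz hz0)
  have : (r + ε) • (P *ᵥ x) ≤ B *ᵥ (P *ᵥ x) := by
    rw [hBy, add_smul]
    exact add_le_add_right hεy _
  linarith [le_spr_of_smul_le_mulVec hB.nonneg (mulVec_apply_pos hP hx hx0) this]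

end SpectralRadius

/-- For a complex matrix `M` and an irreducible nonnegative matrix `B` of the same size with
`|M| ≤ B` entrywise and strict inequality in at least one entry, `spr(M) < spr(B)`. -/
theorem stmt10 {n : Type*} [Fintype n] [DecidableEq n]
    (M : Matrix n n ℂ) (B : Matrix n n ℝ)
    (hnn : ∀ i j, 0 ≤ B i j)
    (hirr : ∀ i j, ∃ k : ℕ, 0 < k ∧ 0 < (B ^ k) i j)
    (hle : ∀ i j, ‖M i j‖ ≤ B i j)
    (hstrict : ∃ i j, ‖M i j‖ < B i j) :
    spr M < spr (B.map Complex.ofReal) := by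
  obtain ⟨i₀, j₀, hij⟩ := hstrict
  have : Nonempty n := ⟨i₀⟩
  have hB : B.IsIrreducible := (isIrreducible_iff_exists_pow_pos hnn).mpr hirr
  obtain ⟨μ, hμ, hμM⟩ := exists_mem_spectrum_norm_eq_spr M
  obtain ⟨v, hv0, hv⟩ := exists_mulVec_eq_smul_of_mem_spectrum hμ
  set x : n → ℝ := fun i => ‖v i‖
  have hx : 0 ≤ x := fun i => norm_nonneg _
  have hx0 : x ≠ 0 := fun h => hv0 (funext fun i => norm_eq_zero.mp (congrFun h i))
  have hMx : ‖μ‖ • x ≤ M.map (fun a => ‖a‖) *ᵥ x := norm_smul_le_map_norm_mulVec hv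
  rw [← hμM]
  refine hB.lt_spr_of_smul_le_mulVec hx (hMx.trans (mulVec_le_mulVec_of_le hle hx)) fun h => ?_
  have hxpos := hB.pos_of_mulVec_eq_smul hx hx0 h.symm
  linarith [hMx i₀, congrFun h i₀,
    mulVec_apply_lt_of_lt (A := M.map (fun a => ‖a‖)) hle hij hxpos]
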